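/- arXiv:1610.00903 — 2 statements merged into one kernel-verified Lean document; each statement's English description precedes it below -/
import Mathlib

section
/- Let b(n) count hyperbinary expansions of n (with b(0)=1) and let s(n) be Stern's diatomic sequence defined by s(0)=0, s(1)=1, s(2n)=s(n), s(2n+1)=s(n)+s(n+1). Then b(n) = s(n+1) for all n ≥ 0. -/
/-- The integer represented by a word of digits (most significant first). -/
def hval (w : List ℕ) : ℕ := w.foldl (fun a d => 2 * a + d) 0

/-- `w` is a hyperbinary expansion of `n`: digits in {0,1,2}, nonzero leading
digit, representing `n`.  (The empty word is the unique expansion of `0`.) -/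
def IsHyp (n : ℕ) (w : List ℕ) : Prop :=
  (∀ d ∈ w, d ≤ 2) ∧ w.head? ≠ some 0 ∧ hval w = n

/-- `b n`: the number of hyperbinary expansions of `n` (so `b 0 = 1`). -/
noncomputable def hb (n : ℕ) : ℕ := Set.ncard {w : List ℕ | IsHyp n w}

/-- A single rewriting step: `02 → 10` or `12 → 20`, a leading `2` treated as `02`. -/
def Step (u v : List ℕ) : Prop :=
  (∃ x y : List ℕ, u = x ++ [0, 2] ++ y ∧ v = x ++ [1, 0] ++ y) ∨
  (∃ x y : List ℕ, u = x ++ [1, 2] ++ y ∧ v = x ++ [2, 0] ++ y) ∨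
  (∃ y : List ℕ, u = 2 :: y ∧ v = 1 :: 0 :: y)

/-- Strict shortlex order: first by length, then lexicographically. -/
def Shortlex (u v : List ℕ) : Prop :=
  u.length < v.length ∨ (u.length = v.length ∧ List.Lex (· < ·) u v)

/-- Number of maximal blocks of consecutive `2`'s in a word. -/
def blocks2 : List ℕ → ℕ
  | [] => 0
  | d :: rest => blocks2 rest + (if d = 2 ∧ rest.head? ≠ some 2 then 1 else 0)

/-! Removing the last digit: an expansion of `2n+1` ends in `1` and comes from an expansion of
`n`, while an expansion of `2n+2` ends in `0` or `2` and comes from one of `n+1` or of `n`.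
Hence `b(2n+1) = b(n)` and `b(2n+2) = b(n+1) + b(n)`, which are the recurrences of `s`
shifted by one. -/

lemma foldl_hval (w : List ℕ) (a : ℕ) :
    w.foldl (fun a d => 2 * a + d) a = a * 2 ^ w.length + hval w := by
  induction w generalizing a with
  | nil => simp [hval]
  | cons d w ih =>
    show List.foldl _ (2 * a + d) w = _ + List.foldl _ (2 * 0 + d) w
    rw [ih, ih, List.length_cons]
    ring

lemma hval_cons (d : ℕ) (w : List ℕ) : hval (d :: w) = d * 2 ^ w.length + hval w := by
  show List.foldl _ (2 * 0 + d) w = _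
  rw [foldl_hval, mul_zero, zero_add]

lemma hval_append_singleton (w : List ℕ) (d : ℕ) : hval (w ++ [d]) = 2 * hval w + d := by
  simp [hval, List.foldl_append]

lemma isHyp_zero_iff {w : List ℕ} : IsHyp 0 w ↔ w = [] := by
  refine ⟨fun ⟨_, hhead, hval0⟩ => ?_, fun hw => by simp [hw, IsHyp, hval]⟩
  cases w with
  | nil => rfl
  | cons d w =>
    have hd : 0 < d := Nat.pos_of_ne_zero fun h => hhead (by simp [h])
    have : 0 < d * 2 ^ w.length := by positivity
    rw [hval_cons] at hval0
    omega

lemma IsHyp.exists_eq_append_singleton {n : ℕ} {w : List ℕ} (h : IsHyp n w) (hn : 0 < n) :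
    ∃ f d, w = f ++ [d] ∧ d ≤ 2 ∧ n = 2 * hval f + d := by
  obtain ⟨hdigits, -, rfl⟩ := h
  rcases List.eq_nil_or_concat' w with rfl | ⟨f, d, rfl⟩
  · simp [hval] at hn
  · exact ⟨f, d, rfl, hdigits d (by simp), hval_append_singleton f d⟩

lemma isHyp_append_singleton_iff {n d : ℕ} {w : List ℕ} (hd : d ≤ 2)
    (hwd : w ≠ [] ∨ d ≠ 0) : IsHyp (2 * n + d) (w ++ [d]) ↔ IsHyp n w := by
  have hhead : (w ++ [d]).head? ≠ some 0 ↔ w.head? ≠ some 0 := by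
    cases w with
    | nil => simpa using hwd
    | cons a w => simp
  simp only [IsHyp, List.mem_append, List.mem_singleton, hval_append_singleton, hhead]
  constructor
  · rintro ⟨hdigits, hw, hv⟩
    exact ⟨fun e he => hdigits e (Or.inl he), hw, by omega⟩
  · rintro ⟨hdigits, hw, rfl⟩
    refine ⟨fun e he => ?_, hw, rfl⟩
    rcases he with he | rfl
    exacts [hdigits e he, hd]

lemma setOf_isHyp_zero : {w : List ℕ | IsHyp 0 w} = {[]} := by
  ext w
  exact isHyp_zero_iff

lemma setOf_isHyp_two_mul_add_one (n : ℕ) :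
    {w : List ℕ | IsHyp (2 * n + 1) w} = (· ++ [1]) '' {w : List ℕ | IsHyp n w} := by
  ext w
  refine ⟨fun hw => ?_, ?_⟩
  · obtain ⟨f, d, rfl, hd, hn⟩ := hw.exists_eq_append_singleton (by omega)
    obtain rfl : d = 1 := by omega
    rw [Set.mem_ofPred_eq, isHyp_append_singleton_iff (by norm_num) (by simp)] at hw
    exact ⟨f, hw, rfl⟩
  · rintro ⟨f, hf, rfl⟩
    exact (isHyp_append_singleton_iff (by norm_num) (by simp)).mpr hf

lemma setOf_isHyp_two_mul_add_two (n : ℕ) :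
    {w : List ℕ | IsHyp (2 * n + 2) w} =
      (· ++ [0]) '' {w : List ℕ | IsHyp (n + 1) w} ∪
        (· ++ [2]) '' {w : List ℕ | IsHyp n w} := by
  ext w
  refine ⟨fun hw => ?_, ?_⟩
  · obtain ⟨f, d, rfl, hd, hn⟩ := hw.exists_eq_append_singleton (by omega)
    rcases (by omega : d = 0 ∨ d = 2) with rfl | rfl
    · have hf : f ≠ [] := by rintro rfl; simp [hval] at hn
      rw [Set.mem_ofPred_eq, show 2 * n + 2 = 2 * (n + 1) + 0 by ring,
        isHyp_append_singleton_iff (by norm_num) (Or.inl hf)] at hw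
      exact Or.inl ⟨f, hw, rfl⟩
    · rw [Set.mem_ofPred_eq, isHyp_append_singleton_iff le_rfl (by simp)] at hw
      exact Or.inr ⟨f, hw, rfl⟩
  · rintro (⟨f, hf, rfl⟩ | ⟨f, hf, rfl⟩)
    · have hf' : f ≠ [] := by rintro rfl; simp [IsHyp, hval] at hf
      rw [Set.mem_ofPred_eq, show 2 * n + 2 = 2 * (n + 1) + 0 by ring,
        isHyp_append_singleton_iff (by norm_num) (Or.inl hf')]
      exact hf
    · exact (isHyp_append_singleton_iff le_rfl (by simp)).mpr hf

lemma setOf_isHyp_finite (n : ℕ) : {w : List ℕ | IsHyp n w}.Finite := by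
  induction n using Nat.strong_induction_on with
  | _ n ih =>
    rcases n with _ | m
    · simp [setOf_isHyp_zero]
    obtain ⟨k, rfl | rfl⟩ := Nat.even_or_odd' m
    · rw [setOf_isHyp_two_mul_add_one]
      exact (ih k (by omega)).image _
    · rw [show 2 * k + 1 + 1 = 2 * k + 2 by ring, setOf_isHyp_two_mul_add_two]
      exact ((ih (k + 1) (by omega)).image _).union ((ih k (by omega)).image _)

lemma hb_zero : hb 0 = 1 := by
  rw [hb, setOf_isHyp_zero, Set.ncard_singleton]

lemma hb_two_mul_add_one (n : ℕ) : hb (2 * n + 1) = hb n := by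
  rw [hb, hb, setOf_isHyp_two_mul_add_one,
    Set.ncard_image_of_injective _ (List.append_left_injective _)]

lemma hb_two_mul_add_two (n : ℕ) : hb (2 * n + 2) = hb (n + 1) + hb n := by
  have hdisj : Disjoint ((· ++ [0]) '' {w : List ℕ | IsHyp (n + 1) w})
      ((· ++ [2]) '' {w : List ℕ | IsHyp n w}) := by
    rw [Set.disjoint_left]
    rintro _ ⟨u, -, rfl⟩ ⟨v, -, huv⟩
    simpa using (List.append_inj' huv rfl).2
  rw [hb, setOf_isHyp_two_mul_add_two,
    Set.ncard_union_eq hdisj ((setOf_isHyp_finite _).image _) ((setOf_isHyp_finite _).image _),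
    Set.ncard_image_of_injective _ (List.append_left_injective _),
    Set.ncard_image_of_injective _ (List.append_left_injective _), hb, hb]

theorem stmt4_general (s : ℕ → ℕ) (h1 : s 1 = 1)
    (heven : ∀ n : ℕ, s (2 * n) = s n)
    (hodd : ∀ n : ℕ, s (2 * n + 1) = s n + s (n + 1)) :
    ∀ n : ℕ, hb n = s (n + 1) := by
  intro n
  induction n using Nat.strong_induction_on with
  | _ n ih =>
    rcases n with _ | m
    · rw [hb_zero, h1]
    obtain ⟨k, rfl | rfl⟩ := Nat.even_or_odd' m
    · rw [hb_two_mul_add_one, ih k (by omega), show 2 * k + 1 + 1 = 2 * (k + 1) by ring, heven]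
    · rw [show 2 * k + 1 + 1 = 2 * k + 2 by ring, hb_two_mul_add_two, ih (k + 1) (by omega),
        ih k (by omega), show 2 * k + 2 + 1 = 2 * (k + 1) + 1 by ring, hodd, add_comm]

theorem stmt4 (s : ℕ → ℕ) (h0 : s 0 = 0) (h1 : s 1 = 1)
    (heven : ∀ n : ℕ, s (2 * n) = s n)
    (hodd : ∀ n : ℕ, s (2 * n + 1) = s n + s (n + 1)) :
    ∀ n : ℕ, hb n = s (n + 1) :=
  stmt4_general s h1 heven hodd
end

section
/- A hyperbinary expansion of n admits a successor under the rewriting rules 02 → 10, 12 → 20 (i.e., has a child) if and only if it contains the digit 2; and it arises from some expansion by one rewriting step (i.e., has a parent) if and only if it contains the digit 0. -/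
lemma hval_foldl (v : List ℕ) (a : ℕ) :
    v.foldl (fun a d => 2 * a + d) a = a * 2 ^ v.length + hval v := by
  induction v generalizing a with
  | nil => simp [hval]
  | cons d t ih =>
    have h1 : hval (d :: t) = t.foldl (fun a d => 2 * a + d) d := by
      simp [hval]
    simp only [List.foldl_cons, List.length_cons]
    rw [ih (2 * a + d), h1, ih d, pow_succ]
    ring

lemma hval_append (u v : List ℕ) :
    hval (u ++ v) = hval u * 2 ^ v.length + hval v := by
  unfold hval
  rw [List.foldl_append]
  exact hval_foldl v _

lemma hval_mid (x y : List ℕ) (a b c d : ℕ) (h : hval [a, b] = hval [c, d]) :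
    hval (x ++ [a, b] ++ y) = hval (x ++ [c, d] ++ y) := by
  rw [hval_append, hval_append, hval_append, hval_append, h]
  simp

lemma mem_split_first {a : ℕ} : ∀ w : List ℕ, a ∈ w →
    (∃ y, w = a :: y) ∨ (∃ x d y, w = x ++ d :: a :: y ∧ d ≠ a) := by
  intro w
  induction w with
  | nil => simp
  | cons b t ih =>
    intro h
    by_cases hb : b = a
    · exact Or.inl ⟨t, by rw [hb]⟩
    · have ht : a ∈ t := by
        rcases List.mem_cons.mp h with h1 | h2
        · exact absurd h1.symm hb
        · exact h2
      rcases ih ht with ⟨y, rfl⟩ | ⟨x, d, y, rfl, hd⟩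
      · exact Or.inr ⟨[], b, y, rfl, hb⟩
      · exact Or.inr ⟨b :: x, d, y, rfl, hd⟩

theorem stmt13 (n : ℕ) (hn : 0 < n) (w : List ℕ) (hw : IsHyp n w) :
    ((∃ v : List ℕ, IsHyp n v ∧ Step w v) ↔ 2 ∈ w) ∧
    ((∃ u : List ℕ, IsHyp n u ∧ Step u w) ↔ 0 ∈ w) := by
  obtain ⟨hdig, hhead, hv⟩ := hw
  constructor
  · constructor
    · rintro ⟨v, _, (⟨x, y, rfl, _⟩ | ⟨x, y, rfl, _⟩ | ⟨y, rfl, _⟩)⟩ <;> simp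
    · intro h2
      rcases mem_split_first w h2 with ⟨y, rfl⟩ | ⟨x, d, y, hweq, hd⟩
      · -- w = 2 :: y : use rule 3
        refine ⟨1 :: 0 :: y, ⟨?_, by simp, ?_⟩, Or.inr (Or.inr ⟨y, rfl, rfl⟩)⟩
        · intro e he
          simp only [List.mem_cons] at he
          rcases he with rfl | rfl | he
          · norm_num
          · norm_num
          · exact hdig e (by simp [he])
        · rw [← hv]
          have h1 : (2 : ℕ) :: y = [2] ++ y := rfl
          have h2' : (1 : ℕ) :: 0 :: y = [1, 0] ++ y := rfl
          rw [h1, h2', hval_append, hval_append]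
          simp [hval]
      · have hd2 : d ≤ 2 := hdig d (by rw [hweq]; simp)
        have hx : ∀ e ∈ x, e ≤ 2 := fun e he => hdig e (by rw [hweq]; simp [he])
        have hy : ∀ e ∈ y, e ≤ 2 := fun e he => hdig e (by rw [hweq]; simp [he])
        have hmid : w = x ++ [d, 2] ++ y := by rw [hweq]; simp
        interval_cases d
        · -- w = x ++ [0,2] ++ y, x nonempty since head ≠ 0
          refine ⟨x ++ [1, 0] ++ y, ⟨?_, ?_, ?_⟩, Or.inl ⟨x, y, hmid, rfl⟩⟩
          · intro e he
            rcases List.mem_append.mp he with h1 | h1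
            · rcases List.mem_append.mp h1 with h2 | h2
              · exact hx e h2
              · simp only [List.mem_cons, List.not_mem_nil, or_false] at h2
                omega
            · exact hy e h1
          · cases x with
            | nil => exact absurd (by rw [hweq]; rfl) hhead
            | cons c x' =>
              have hc : c ≠ 0 := by
                intro h
                exact hhead (by rw [hweq, h]; rfl)
              simpa using hc
          · rw [← hv, hmid]
            exact (hval_mid x y 0 2 1 0 (by simp [hval])).symm
        · -- w = x ++ [1,2] ++ y
          refine ⟨x ++ [2, 0] ++ y, ⟨?_, ?_, ?_⟩, Or.inr (Or.inl ⟨x, y, hmid, rfl⟩)⟩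
          · intro e he
            rcases List.mem_append.mp he with h1 | h1
            · rcases List.mem_append.mp h1 with h2 | h2
              · exact hx e h2
              · simp only [List.mem_cons, List.not_mem_nil, or_false] at h2
                omega
            · exact hy e h1
          · cases x with
            | nil => simp
            | cons c x' =>
              have hc : c ≠ 0 := by
                intro h
                exact hhead (by rw [hweq, h]; rfl)
              simpa using hc
          · rw [← hv, hmid]
            exact (hval_mid x y 1 2 2 0 (by simp [hval])).symm
        · exact absurd rfl hd
  · constructor
    · rintro ⟨u, _, (⟨x, y, _, rfl⟩ | ⟨x, y, _, rfl⟩ | ⟨y, _, rfl⟩)⟩ <;> simp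
    · intro h0
      rcases mem_split_first w h0 with ⟨y, rfl⟩ | ⟨x, d, y, hweq, hd⟩
      · exact absurd rfl hhead
      · have hd2 : d ≤ 2 := hdig d (by rw [hweq]; simp)
        have hx : ∀ e ∈ x, e ≤ 2 := fun e he => hdig e (by rw [hweq]; simp [he])
        have hy : ∀ e ∈ y, e ≤ 2 := fun e he => hdig e (by rw [hweq]; simp [he])
        have hmid : w = x ++ [d, 0] ++ y := by rw [hweq]; simp
        interval_cases d
        · exact absurd rfl hd
        · -- w = x ++ [1,0] ++ y
          cases x with
          | nil =>
            -- w = 1 :: 0 :: y, parent 2 :: y via rule 3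
            refine ⟨2 :: y, ⟨?_, by simp, ?_⟩,
              Or.inr (Or.inr ⟨y, rfl, by rw [hweq]; rfl⟩)⟩
            · intro e he
              simp only [List.mem_cons] at he
              rcases he with rfl | he
              · norm_num
              · exact hy e he
            · rw [← hv, hweq]
              have h1 : (2 : ℕ) :: y = [2] ++ y := rfl
              have h2' : ([] : List ℕ) ++ 1 :: 0 :: y = [1, 0] ++ y := rfl
              rw [h1, h2', hval_append, hval_append]
              simp [hval]
          | cons c x' =>
            refine ⟨(c :: x') ++ [0, 2] ++ y, ⟨?_, ?_, ?_⟩,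
              Or.inl ⟨c :: x', y, rfl, hmid⟩⟩
            · intro e he
              rcases List.mem_append.mp he with h1 | h1
              · rcases List.mem_append.mp h1 with h2 | h2
                · exact hx e h2
                · simp only [List.mem_cons, List.not_mem_nil, or_false] at h2
                  omega
              · exact hy e h1
            · have hc : c ≠ 0 := by
                intro h
                exact hhead (by rw [hweq, h]; rfl)
              simpa using hc
            · rw [← hv, hmid]
              exact hval_mid (c :: x') y 0 2 1 0 (by simp [hval])
        · -- w = x ++ [2,0] ++ y, parent x ++ [1,2] ++ y
          refine ⟨x ++ [1, 2] ++ y, ⟨?_, ?_, ?_⟩,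
            Or.inr (Or.inl ⟨x, y, rfl, hmid⟩)⟩
          · intro e he
            rcases List.mem_append.mp he with h1 | h1
            · rcases List.mem_append.mp h1 with h2 | h2
              · exact hx e h2
              · simp only [List.mem_cons, List.not_mem_nil, or_false] at h2
                omega
            · exact hy e h1
          · cases x with
            | nil => simp
            | cons c x' =>
              have hc : c ≠ 0 := by
                intro h
                exact hhead (by rw [hweq, h]; rfl)
              simpa using hc
          · rw [← hv, hmid]
            exact hval_mid x y 1 2 2 0 (by simp [hval])
end
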